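/- Let n be an odd positive integer with n ≡ 1 (mod 4) and n ∉ {5, 9}. Then hmin(n) = (n+3)/4, and d = (n+1)/2 is the unique odd d with 1 ≤ d ≤ n satisfying hmin(n, d) = hmin(n); that is, hmin(n, (n+1)/2) = (n+3)/4 and hmin(n, d) > (n+3)/4 for every odd d ≤ n with d ≠ (n+1)/2. -/

import Mathlib

open Finset
open scoped Classical

/-- The closed neighborhood `N[v] = {v} ∪ N(v)` of a vertex `v` in a simple graph `G`.
A `d`-regular graph with loops is modeled by a simple graph in which every
closed neighborhood has size `d`. -/
noncomputable def closedNbhd {n : ℕ} (G : SimpleGraph (Fin n)) (v : Fin n) : Finset (Fin n) :=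
  Finset.univ.filter fun u => u = v ∨ G.Adj v u

/-- A configuration with parameters `(n, d, h)`: a simple graph `G` on `n` vertices all
of whose closed neighborhoods have size `d` (i.e. a `d`-regular graph with loops),
together with an opinion function `f : V → {1, -1}` having exactly `h` happy vertices. -/
def IsConfig {n : ℕ} (d h : ℕ) (G : SimpleGraph (Fin n)) (f : Fin n → ℤ) : Prop :=
  (∀ v, (closedNbhd G v).card = d) ∧ (∀ v, f v = 1 ∨ f v = -1) ∧
  (Finset.univ.filter fun v => f v = 1).card = h

/-- The number of proponents: vertices `v` with `∑_{u ∈ N[v]} f u ≥ 1`. -/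
noncomputable def numProponents {n : ℕ} (G : SimpleGraph (Fin n)) (f : Fin n → ℤ) : ℕ :=
  (Finset.univ.filter fun v => 1 ≤ ∑ u ∈ closedNbhd G v, f u).card

/-- A configuration is approving if more than `n/2` of its vertices are proponents. -/
def IsApproving {n : ℕ} (G : SimpleGraph (Fin n)) (f : Fin n → ℤ) : Prop :=
  2 * numProponents G f > n

/-- `hmin n d`: the least `h` for which an approving configuration with parameters
`(n, d, h)` exists. -/
noncomputable def hmin (n d : ℕ) : ℕ :=
  sInf {h : ℕ | ∃ (G : SimpleGraph (Fin n)) (f : Fin n → ℤ), IsConfig d h G f ∧ IsApproving G f}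

/-- `hmax n d`: the greatest `h ≤ n` for which a disapproving configuration with parameters
`(n, d, h)` exists. -/
noncomputable def hmax (n d : ℕ) : ℕ :=
  sSup {h : ℕ | h ≤ n ∧
    ∃ (G : SimpleGraph (Fin n)) (f : Fin n → ℤ), IsConfig d h G f ∧ ¬ IsApproving G f}

/-- `hminN n`: the minimum of `hmin n d` over odd `d` with `1 ≤ d ≤ n`. -/
noncomputable def hminN (n : ℕ) : ℕ :=
  sInf {m : ℕ | ∃ d : ℕ, Odd d ∧ 1 ≤ d ∧ d ≤ n ∧ m = hmin n d}

/-! Each proponent sees at least `(d+1)/2` happy vertices, so double counting the pairs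
(proponent `v`, happy `u ∈ N[v]`) gives `(n+1)(d+1) ≤ 4hd`, while a single proponent gives
`d+1 ≤ 2h`. For `n = 4k+1` the first bound forces `h ≥ k+1`, and `h = k+1` then pins `d = 2k+1`.
The value `k+1` is attained at `d = 2k+1` by a graph in which the `k+1` happy vertices and `k`
further vertices form `2k+1` proponents that all see every happy vertex; the further vertices
carry the complement of a cycle, which needs `k ≥ 3` (for `k = 0` a single vertex does). Circulant graphs with every vertex happy show that an approving configuration
exists for each odd `d ≤ n`, so `hmin n d` is a genuine minimum rather than the junk `sInf ∅ = 0`.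
-/

section ClosedNbhd

variable {n : ℕ} {G : SimpleGraph (Fin n)}

lemma mem_closedNbhd {v u : Fin n} : u ∈ closedNbhd G v ↔ u = v ∨ G.Adj v u := by
  simp [closedNbhd]

lemma mem_closedNbhd_comm {v u : Fin n} : u ∈ closedNbhd G v ↔ v ∈ closedNbhd G u := by
  simp only [mem_closedNbhd, eq_comm, G.adj_comm]

lemma sum_card_filter_closedNbhd {d : ℕ} (hd : ∀ v, #(closedNbhd G v) = d) (p : Fin n → Prop)
    [DecidablePred p] :
    ∑ v, #{u ∈ closedNbhd G v | p u} = #{u | p u} * d := by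
  have := sum_card_bipartiteAbove_eq_sum_card_bipartiteBelow
    (fun v u => u ∈ closedNbhd G v) (s := univ) (t := {u | p u})
  simp only [bipartiteAbove, bipartiteBelow, ← mem_closedNbhd_comm, filter_mem_eq_inter,
    univ_inter, hd, sum_const, smul_eq_mul] at this
  rw [← this]
  congr! 2 with v
  ext u
  simp [and_comm]

end ClosedNbhd

lemma sum_eq_two_mul_card_filter_sub_card {α : Type*} (s : Finset α) {f : α → ℤ}
    (hf : ∀ u ∈ s, f u = 1 ∨ f u = -1) :
    ∑ u ∈ s, f u = 2 * #{u ∈ s | f u = 1} - #s := by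
  have hneg : ∀ u ∈ s.filter (¬f · = 1), f u = -1 := fun u hu =>
    (hf u (mem_filter.1 hu).1).resolve_left (mem_filter.1 hu).2
  rw [← sum_filter_add_sum_filter_not s (f · = 1), sum_congr rfl (fun u hu => (mem_filter.1 hu).2),
    sum_congr rfl hneg, ← card_filter_add_card_filter_not (s := s) (f · = 1)]
  simp only [sum_const, nsmul_eq_mul, mul_one, mul_neg]
  push_cast
  ring

lemma one_le_sum_iff {α : Type*} {s : Finset α} {f : α → ℤ} (hf : ∀ u ∈ s, f u = 1 ∨ f u = -1) :
    1 ≤ ∑ u ∈ s, f u ↔ #s + 1 ≤ 2 * #{u ∈ s | f u = 1} := by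
  rw [sum_eq_two_mul_card_filter_sub_card s hf]
  omega

section LowerBound

variable {n d h : ℕ} {G : SimpleGraph (Fin n)} {f : Fin n → ℤ}

lemma IsConfig.add_one_le_two_mul_card_happy (hc : IsConfig d h G f) {v : Fin n}
    (hv : 1 ≤ ∑ u ∈ closedNbhd G v, f u) :
    d + 1 ≤ 2 * #{u ∈ closedNbhd G v | f u = 1} := by
  rwa [one_le_sum_iff fun u _ => hc.2.1 u, hc.1 v] at hv

lemma IsApproving.add_one_mul_add_one_le (ha : IsApproving G f) (hc : IsConfig d h G f) :
    (n + 1) * (d + 1) ≤ 4 * h * d := by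
  set P : Finset (Fin n) := {v | 1 ≤ ∑ u ∈ closedNbhd G v, f u}
  have hP : n + 1 ≤ 2 * #P := ha
  calc (n + 1) * (d + 1) ≤ 2 * ∑ _v ∈ P, (d + 1) := by
        rw [sum_const, smul_eq_mul, ← mul_assoc]; gcongr
    _ ≤ 2 * ∑ v ∈ P, 2 * #{u ∈ closedNbhd G v | f u = 1} := by
        gcongr with v hv
        exact hc.add_one_le_two_mul_card_happy (mem_filter.1 hv).2
    _ ≤ 2 * ∑ v, 2 * #{u ∈ closedNbhd G v | f u = 1} := by
        gcongr; exact subset_univ P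
    _ = 4 * h * d := by
        rw [← mul_sum, sum_card_filter_closedNbhd hc.1, hc.2.2]; ring

lemma IsApproving.add_one_le_two_mul (ha : IsApproving G f) (hc : IsConfig d h G f) :
    d + 1 ≤ 2 * h := by
  obtain ⟨v, hv⟩ : ({v | 1 ≤ ∑ u ∈ closedNbhd G v, f u} : Finset (Fin n)).Nonempty := by
    rw [← card_pos]; unfold IsApproving numProponents at ha; omega
  calc d + 1 ≤ 2 * #{u ∈ closedNbhd G v | f u = 1} :=
        hc.add_one_le_two_mul_card_happy (mem_filter.1 hv).2
    _ ≤ 2 * h := by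
        rw [← hc.2.2]; gcongr; exact subset_univ _

end LowerBound

lemma card_filter_fin_val {n : ℕ} (p : ℕ → Prop) [DecidablePred p] :
    #{u : Fin n | p u} = #{a ∈ range n | p a} := by
  rw [← card_map Fin.valEmbedding, ← Nat.Iio_eq_range, ← Fin.map_valEmbedding_univ, filter_map]
  rfl

lemma card_filter_fin_val_le {n m : ℕ} (hm : m < n) : #{u : Fin n | u.val ≤ m} = m + 1 := by
  rw [card_filter_fin_val (· ≤ m), ← card_range (m + 1)]
  congr 1
  ext a
  simp only [mem_filter, mem_range]
  omega

lemma card_closedNbhd_comap_val {n : ℕ} (r : ℕ → ℕ → Prop) (v : Fin n) :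
    #(closedNbhd ((SimpleGraph.fromRel r).comap Fin.val) v)
      = #{a ∈ range n | a = v.val ∨ r v a ∨ r a v} := by
  rw [← card_filter_fin_val]
  congr 1
  ext u
  simp only [mem_closedNbhd, SimpleGraph.comap_adj, SimpleGraph.fromRel_adj, mem_filter,
    mem_univ, true_and, Fin.ext_iff]
  tauto

/-- For `a < b < n`: `a` and `b` are at cyclic distance at most `m` modulo `n`. -/
def circulantRel (n m a b : ℕ) : Prop := a < b ∧ (b ≤ a + m ∨ a + n ≤ b + m)

lemma card_closedNbhd_circulant {n m : ℕ} (hmn : 2 * m + 1 ≤ n) (v : Fin n) :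
    #(closedNbhd ((SimpleGraph.fromRel (circulantRel n m)).comap Fin.val) v) = 2 * m + 1 := by
  obtain ⟨b, hb⟩ := v
  rw [card_closedNbhd_comap_val]
  by_cases hlow : b < m
  · have : {a ∈ range n | a = b ∨ circulantRel n m b a ∨ circulantRel n m a b}
        = Icc 0 (b + m) ∪ Icc (b + n - m) (n - 1) := by
      ext a; rw [mem_filter]; simp only [mem_range, mem_union, mem_Icc, circulantRel]; omega
    rw [this, card_union_of_disjoint (disjoint_left.2 fun a ha ha' => by
        simp only [mem_Icc] at ha ha'; omega), Nat.card_Icc, Nat.card_Icc]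
    omega
  by_cases hhigh : n ≤ b + m
  · have : {a ∈ range n | a = b ∨ circulantRel n m b a ∨ circulantRel n m a b}
        = Icc (b - m) (n - 1) ∪ Icc 0 (b + m - n) := by
      ext a; rw [mem_filter]; simp only [mem_range, mem_union, mem_Icc, circulantRel]; omega
    rw [this, card_union_of_disjoint (disjoint_left.2 fun a ha ha' => by
        simp only [mem_Icc] at ha ha'; omega), Nat.card_Icc, Nat.card_Icc]
    omega
  · have : {a ∈ range n | a = b ∨ circulantRel n m b a ∨ circulantRel n m a b}
        = Icc (b - m) (b + m) := by
      ext a; rw [mem_filter]; simp only [mem_range, mem_Icc, circulantRel]; omega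
    rw [this, Nat.card_Icc]
    omega

lemma exists_isApproving_all_happy {n d : ℕ} (hd : Odd d) (hdn : d ≤ n) :
    ∃ (G : SimpleGraph (Fin n)) (f : Fin n → ℤ), IsConfig d n G f ∧ IsApproving G f := by
  obtain ⟨m, rfl⟩ := hd
  have hdeg := card_closedNbhd_circulant hdn
  refine ⟨_, fun _ => 1, ⟨hdeg, fun _ => Or.inl rfl, by simp⟩, ?_⟩
  have hprop : ∀ v : Fin n,
      1 ≤ ∑ u ∈ closedNbhd ((SimpleGraph.fromRel (circulantRel n m)).comap Fin.val) v, (1 : ℤ) := by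
    intro v; rw [sum_const, hdeg]; simp
  unfold IsApproving numProponents
  rw [filter_true_of_mem fun v _ => hprop v, card_univ, Fintype.card_fin]
  omega

/-- On `4k+1` vertices: `H = [0, k]`, `A = [k+1, 2k]`, `Q = [2k+1, 4k]`. `H` is joined to all of
`H ∪ A`, `A` carries the complement of the cycle `k+1, …, 2k`, `Q` is a clique, and each `a ∈ A`
is joined to `2a-1, 2a ∈ Q`. -/
def extremalRel (k a b : ℕ) : Prop :=
  a ≤ k ∧ b ≤ 2 * k ∨
  k + 1 ≤ a ∧ a + 2 ≤ b ∧ b ≤ 2 * k ∧ ¬(a = k + 1 ∧ b = 2 * k) ∨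
  2 * k + 1 ≤ a ∧ 2 * k + 1 ≤ b ∨
  k + 1 ≤ a ∧ a ≤ 2 * k ∧ (b = 2 * a - 1 ∨ b = 2 * a)

def extremalGraph (k : ℕ) : SimpleGraph (Fin (4 * k + 1)) :=
  (SimpleGraph.fromRel (extremalRel k)).comap Fin.val

lemma mem_closedNbhd_extremalGraph {k : ℕ} {v u : Fin (4 * k + 1)} (hv : v.val ≤ 2 * k)
    (hu : u.val ≤ k) : u ∈ closedNbhd (extremalGraph k) v := by
  rw [mem_closedNbhd, extremalGraph, SimpleGraph.comap_adj, SimpleGraph.fromRel_adj, Fin.ext_iff]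
  unfold extremalRel
  omega

lemma card_closedNbhd_extremalGraph {k : ℕ} (hk : 3 ≤ k) (v : Fin (4 * k + 1)) :
    #(closedNbhd (extremalGraph k) v) = 2 * k + 1 := by
  obtain ⟨b, hb⟩ := v
  rw [extremalGraph, card_closedNbhd_comap_val]
  by_cases hH : b ≤ k
  · have : {a ∈ range (4 * k + 1) | a = b ∨ extremalRel k b a ∨ extremalRel k a b}
        = range (2 * k + 1) := by
      ext a; rw [mem_filter]; simp only [mem_range, extremalRel]; omega
    rw [this, card_range]
  by_cases hA : b ≤ 2 * k
  · -- the two cycle neighbours of `b` in `A` are the non-neighbours of `b` in `H ∪ A`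
    set prev := if b = k + 1 then 2 * k else b - 1
    set next := if b = 2 * k then k + 1 else b + 1
    have : {a ∈ range (4 * k + 1) | a = b ∨ extremalRel k b a ∨ extremalRel k a b}
        = (range (2 * k + 1) \ {prev, next}) ∪ {2 * b - 1, 2 * b} := by
      ext a; rw [mem_filter]
      simp only [mem_range, mem_union, mem_sdiff, mem_insert, mem_singleton, extremalRel, prev,
        next]
      split_ifs <;> omega
    have hsub : {prev, next} ⊆ range (2 * k + 1) := by
      intro a ha; simp only [mem_insert, mem_singleton, mem_range, prev, next] at ha ⊢
      split_ifs at ha <;> omega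
    have hdisj : Disjoint (range (2 * k + 1) \ {prev, next}) {2 * b - 1, 2 * b} :=
      disjoint_left.2 fun a ha ha' => by
        simp only [mem_sdiff, mem_range, mem_insert, mem_singleton] at ha ha'; omega
    rw [this, card_union_of_disjoint hdisj, card_sdiff_of_subset hsub, card_range,
      card_pair (by simp only [prev, next]; split_ifs <;> omega), card_pair (by omega)]
    omega
  · have : {a ∈ range (4 * k + 1) | a = b ∨ extremalRel k b a ∨ extremalRel k a b}
        = insert ((b + 1) / 2) (Icc (2 * k + 1) (4 * k)) := by
      ext a; rw [mem_filter]; simp only [mem_range, mem_insert, mem_Icc, extremalRel]; omega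
    rw [this, card_insert_of_notMem (by rw [mem_Icc]; omega), Nat.card_Icc]
    omega

lemma exists_isApproving_extremal {k : ℕ} (hk : 3 ≤ k) :
    ∃ (G : SimpleGraph (Fin (4 * k + 1))) (f : Fin (4 * k + 1) → ℤ),
      IsConfig (2 * k + 1) (k + 1) G f ∧ IsApproving G f := by
  set f : Fin (4 * k + 1) → ℤ := fun u => if u.val ≤ k then 1 else -1
  have hf : ∀ u, f u = 1 ∨ f u = -1 := fun u => by by_cases h : u.val ≤ k <;> simp [f, h]
  have hhappy : ∀ u, f u = 1 ↔ u.val ≤ k := fun u => by by_cases h : u.val ≤ k <;> simp [f, h]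
  have hH : #{u | f u = 1} = k + 1 := by
    simp only [hhappy]; exact card_filter_fin_val_le (by omega)
  -- every vertex of `H ∪ A` sees all of `H`, hence is a proponent
  have hprop : ∀ v : Fin (4 * k + 1), v.val ≤ 2 * k →
      1 ≤ ∑ u ∈ closedNbhd (extremalGraph k) v, f u := by
    intro v hv
    rw [one_le_sum_iff fun u _ => hf u, card_closedNbhd_extremalGraph hk]
    have : ({u | f u = 1} : Finset _) ⊆ {u ∈ closedNbhd (extremalGraph k) v | f u = 1} := by
      intro u hu
      simp only [mem_filter, mem_univ, true_and, hhappy] at hu ⊢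
      exact ⟨mem_closedNbhd_extremalGraph hv hu, hu⟩
    have := card_le_card this
    omega
  refine ⟨extremalGraph k, f, ⟨card_closedNbhd_extremalGraph hk, hf, hH⟩, ?_⟩
  have : #{v : Fin (4 * k + 1) | v.val ≤ 2 * k} ≤ numProponents (extremalGraph k) f :=
    card_le_card fun v hv => by
      simp only [mem_filter, mem_univ, true_and] at hv ⊢
      exact hprop v hv
  rw [card_filter_fin_val_le (by omega)] at this
  unfold IsApproving
  omega

lemma hmin_le {n d h : ℕ}
    (hex : ∃ (G : SimpleGraph (Fin n)) (f : Fin n → ℤ), IsConfig d h G f ∧ IsApproving G f) :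
    hmin n d ≤ h :=
  Nat.sInf_le hex

lemma exists_isApproving_hmin {n d : ℕ} (hd : Odd d) (hdn : d ≤ n) :
    ∃ (G : SimpleGraph (Fin n)) (f : Fin n → ℤ), IsConfig d (hmin n d) G f ∧ IsApproving G f :=
  Nat.sInf_mem (s := {h | ∃ (G : SimpleGraph (Fin n)) (f : Fin n → ℤ),
    IsConfig d h G f ∧ IsApproving G f}) ⟨n, exists_isApproving_all_happy hd hdn⟩

section OneModFour

variable {k d : ℕ}

lemma add_one_le_hmin (hd : Odd d) (hdn : d ≤ 4 * k + 1) : k + 1 ≤ hmin (4 * k + 1) d := by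
  obtain ⟨G, f, hc, ha⟩ := exists_isApproving_hmin hd hdn
  have := ha.add_one_mul_add_one_le hc
  nlinarith

lemma eq_of_hmin_eq (hd : Odd d) (hdn : d ≤ 4 * k + 1) (h : hmin (4 * k + 1) d = k + 1) :
    d = 2 * k + 1 := by
  obtain ⟨G, f, hc, ha⟩ := exists_isApproving_hmin hd hdn
  rw [h] at hc
  have := ha.add_one_mul_add_one_le hc
  have := ha.add_one_le_two_mul hc
  nlinarith

lemma hmin_two_mul_add_one (hk : k = 0 ∨ 3 ≤ k) : hmin (4 * k + 1) (2 * k + 1) = k + 1 := by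
  refine le_antisymm (hmin_le ?_) (add_one_le_hmin ⟨k, rfl⟩ (by omega))
  rcases hk with rfl | hk
  · exact exists_isApproving_all_happy odd_one le_rfl
  · exact exists_isApproving_extremal hk

end OneModFour

theorem stmt17_general (n : ℕ) (hmod : n % 4 = 1)
    (h5 : n ≠ 5) (h9 : n ≠ 9) :
    hminN n = (n + 3) / 4 ∧
    hmin n ((n + 1) / 2) = (n + 3) / 4 ∧
    ∀ d : ℕ, Odd d → 1 ≤ d → d ≤ n → d ≠ (n + 1) / 2 → hmin n d > (n + 3) / 4 := by
  obtain ⟨k, rfl⟩ : ∃ k, n = 4 * k + 1 := ⟨n / 4, by omega⟩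
  rw [show (4 * k + 1 + 3) / 4 = k + 1 by omega, show (4 * k + 1 + 1) / 2 = 2 * k + 1 by omega]
  have hopt : hmin (4 * k + 1) (2 * k + 1) = k + 1 := hmin_two_mul_add_one (by omega)
  refine ⟨le_antisymm ?_ ?_, hopt, fun d hd _ hdn hne =>
    (add_one_le_hmin hd hdn).lt_of_ne fun h => hne (eq_of_hmin_eq hd hdn h.symm)⟩
  · exact Nat.sInf_le ⟨2 * k + 1, ⟨k, rfl⟩, by omega, by omega, hopt.symm⟩
  · exact le_csInf ⟨_, 2 * k + 1, ⟨k, rfl⟩, by omega, by omega, rfl⟩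
      fun m ⟨d, hd, _, hdn, hm⟩ => hm ▸ add_one_le_hmin hd hdn

/-- for odd `n ≡ 1 (mod 4)`, `n ∉ {5,9}`: `hmin(n) = (n+3)/4` and
`d = (n+1)/2` is the unique odd degree attaining it. -/
theorem stmt17 (n : ℕ) (hn : Odd n) (hnpos : 0 < n) (hmod : n % 4 = 1)
    (h5 : n ≠ 5) (h9 : n ≠ 9) :
    hminN n = (n + 3) / 4 ∧
    hmin n ((n + 1) / 2) = (n + 3) / 4 ∧
    ∀ d : ℕ, Odd d → 1 ≤ d → d ≤ n → d ≠ (n + 1) / 2 → hmin n d > (n + 3) / 4 :=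
  stmt17_general n hmod h5 h9
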